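/- Consider a temporal reachability game with target set F and winning regions W_k = {u : Player 1 wins from (u,k)}. Suppose a < b and the edge relation is constant on the interval of times a ≤ t < b, i.e. u →_t v iff u →_a v for all such t and all u,v. If W_{b-1} = W_b, then W_t = W_b for all t with a ≤ t ≤ b. -/
import Mathlib


/-!
A temporal graph: vertex set `V`, time-indexed edge relation `E t u v` (edge from `u` to `v`
available at time `t`).  `P1 v` means vertex `v` is controlled by Player 1.  A play from
position `(u,k)` is a maximal sequence of positions `(v₀,k), (v₁,k+1), …` following available
edges, where the owner of the current vertex chooses the next one; the play halts at a
position whose owner has no available edge.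

`P1WinsReach E P1 F u k` : Player 1 wins the reachability game with target set `F` from
position `(u, k)`, i.e. she has a strategy (assigning to each position `(v,t)` with `v ∈ V₁`
that has at least one available edge an available successor) such that every maximal play
from `(u,k)` consistent with it — infinite, or halting at a position with no available
edge — visits `F`.
-/
def P1WinsReach {V : Type*} (E : ℕ → V → V → Prop) (P1 : V → Prop) (F : Set V)
    (u : V) (k : ℕ) : Prop :=
  ∃ σ : V → ℕ → V,
    (∀ (v : V) (t : ℕ), k ≤ t → P1 v → (∃ w, E t v w) → E t v (σ v t)) ∧
    (∀ ρ : ℕ → V, ρ 0 = u →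
      (∀ i, E (k + i) (ρ i) (ρ (i + 1))) →
      (∀ i, P1 (ρ i) → ρ (i + 1) = σ (ρ i) (k + i)) →
      ∃ i, ρ i ∈ F) ∧
    (∀ (ρ : ℕ → V) (n : ℕ), ρ 0 = u →
      (∀ i < n, E (k + i) (ρ i) (ρ (i + 1))) →
      (∀ i < n, P1 (ρ i) → ρ (i + 1) = σ (ρ i) (k + i)) →
      (∀ w, ¬ E (k + n) (ρ n) w) →
      ∃ i ≤ n, ρ i ∈ F)

universe u
variable {V : Type u}

def WinO (E : ℕ → V → V → Prop) (P1 : V → Prop) (F : Set V) (o : Ordinal.{u}) (v : V) (t : ℕ) : Prop :=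
  v ∈ F ∨
  (P1 v ∧ ∃ w, E t v w ∧ ∃ o' : Set.Iio o, WinO E P1 F o'.1 w (t+1)) ∨
  (¬ P1 v ∧ (∃ w, E t v w) ∧ ∀ w, E t v w → ∃ o' : Set.Iio o, WinO E P1 F o'.1 w (t+1))
termination_by o
decreasing_by all_goals exact o'.2

theorem winO_iff (E : ℕ → V → V → Prop) (P1 : V → Prop) (F : Set V) (o : Ordinal.{u}) (v : V) (t : ℕ) :
    WinO E P1 F o v t ↔
    v ∈ F ∨
    (P1 v ∧ ∃ w, E t v w ∧ ∃ o' < o, WinO E P1 F o' w (t+1)) ∨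
    (¬ P1 v ∧ (∃ w, E t v w) ∧ ∀ w, E t v w → ∃ o' < o, WinO E P1 F o' w (t+1)) := by
  rw [WinO]
  simp only [Subtype.exists, Set.mem_Iio, exists_prop]

def Win (E : ℕ → V → V → Prop) (P1 : V → Prop) (F : Set V) (v : V) (t : ℕ) : Prop :=
  ∃ o, WinO E P1 F o v t

theorem win_iff (E : ℕ → V → V → Prop) (P1 : V → Prop) (F : Set V) (v : V) (t : ℕ) :
    Win E P1 F v t ↔
    v ∈ F ∨
    (P1 v ∧ ∃ w, E t v w ∧ Win E P1 F w (t+1)) ∨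
    (¬ P1 v ∧ (∃ w, E t v w) ∧ ∀ w, E t v w → Win E P1 F w (t+1)) := by
  constructor
  · rintro ⟨o, ho⟩
    rw [winO_iff] at ho
    rcases ho with h | ⟨h1, w, hw, o', _, hWo⟩ | ⟨h1, hex, hall⟩
    · exact Or.inl h
    · exact Or.inr (Or.inl ⟨h1, w, hw, o', hWo⟩)
    · exact Or.inr (Or.inr ⟨h1, hex, fun w hw => (hall w hw).imp fun o' h => h.2⟩)
  · rintro (h | ⟨h1, w, hw, o', hWo⟩ | ⟨h1, hex, hall⟩)
    · exact ⟨0, (winO_iff ..).2 (Or.inl h)⟩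
    · exact ⟨o' + 1, (winO_iff ..).2 (Or.inr (Or.inl ⟨h1, w, hw, o',
        Order.lt_succ o', hWo⟩))⟩
    · classical
      set f : {w // E t v w} → Ordinal.{u} := fun w => (hall w.1 w.2).choose with hf
      refine ⟨(⨆ w, f w) + 1, (winO_iff ..).2 (Or.inr (Or.inr ⟨h1, hex, fun w hw => ?_⟩))⟩
      refine ⟨f ⟨w, hw⟩, ?_, (hall w hw).choose_spec⟩
      exact lt_of_le_of_lt (le_ciSup (f := f) (Ordinal.bddAbove_range f) ⟨w, hw⟩) (Order.lt_succ _)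

theorem win_of_mem {E : ℕ → V → V → Prop} {P1 : V → Prop} {F : Set V} {v : V} {t : ℕ}
    (h : v ∈ F) : Win E P1 F v t :=
  (win_iff ..).2 (Or.inl h)

noncomputable def rankW (E : ℕ → V → V → Prop) (P1 : V → Prop) (F : Set V) (v : V) (t : ℕ) : Ordinal.{u} :=
  sInf {o | WinO E P1 F o v t}

theorem winO_rank {E : ℕ → V → V → Prop} {P1 : V → Prop} {F : Set V} {v : V} {t : ℕ}
    (h : Win E P1 F v t) : WinO E P1 F (rankW E P1 F v t) v t :=
  csInf_mem h

theorem rankW_le {E : ℕ → V → V → Prop} {P1 : V → Prop} {F : Set V} {v : V} {t : ℕ} {o : Ordinal.{u}}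
    (h : WinO E P1 F o v t) : rankW E P1 F v t ≤ o :=
  csInf_le (OrderBot.bddBelow _) h

open Classical in
/-- The rank-decreasing strategy. -/
noncomputable def strW (E : ℕ → V → V → Prop) (P1 : V → Prop) (F : Set V) : V → ℕ → V :=
  fun v t =>
    if h : ∃ w, E t v w ∧ ∃ o < rankW E P1 F v t, WinO E P1 F o w (t+1) then h.choose
    else if h2 : ∃ w, E t v w then h2.choose else v

theorem strW_edge {E : ℕ → V → V → Prop} {P1 : V → Prop} {F : Set V} {v : V} {t : ℕ}
    (h : ∃ w, E t v w) : E t v (strW E P1 F v t) := by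
  unfold strW
  split
  · next h' => exact h'.choose_spec.1
  · exact h.choose_spec

/-- Key step: from a winning non-target position, a consistent move stays winning with
smaller rank. -/
theorem strW_step {E : ℕ → V → V → Prop} {P1 : V → Prop} {F : Set V} {v w : V} {t : ℕ}
    (hW : Win E P1 F v t) (hF : v ∉ F) (hE : E t v w)
    (hcons : P1 v → w = strW E P1 F v t) :
    Win E P1 F w (t+1) ∧ rankW E P1 F w (t+1) < rankW E P1 F v t := by
  have hw := winO_rank hW
  rw [winO_iff] at hw
  rcases hw with h | ⟨h1, w', hw', o', ho', hWo⟩ | ⟨h1, _, hall⟩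
  · exact absurd h hF
  · have hex : ∃ w, E t v w ∧ ∃ o < rankW E P1 F v t, WinO E P1 F o w (t+1) :=
      ⟨w', hw', o', ho', hWo⟩
    have hwe : w = strW E P1 F v t := hcons h1
    rw [hwe, strW, dif_pos hex]
    obtain ⟨_, o, ho, hWo'⟩ := hex.choose_spec
    exact ⟨⟨o, hWo'⟩, lt_of_le_of_lt (rankW_le hWo') ho⟩
  · obtain ⟨o, ho, hWo'⟩ := hall w hE
    exact ⟨⟨o, hWo'⟩, lt_of_le_of_lt (rankW_le hWo') ho⟩

theorem win_p1WinsReach {E : ℕ → V → V → Prop} {P1 : V → Prop} {F : Set V} {u : V} {k : ℕ}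
    (h : Win E P1 F u k) : P1WinsReach E P1 F u k := by
  refine ⟨strW E P1 F, fun v t _ _ hex => strW_edge hex, ?_, ?_⟩
  · -- infinite plays
    intro ρ h0 hE hcons
    by_contra hno
    push_neg at hno
    have hWin : ∀ i, Win E P1 F (ρ i) (k+i) := by
      intro i
      induction i with
      | zero => rw [h0]; exact h
      | succ n ih => exact (strW_step ih (hno n) (hE n) (hcons n)).1
    have hdec : ∀ i, rankW E P1 F (ρ (i+1)) (k+(i+1)) < rankW E P1 F (ρ i) (k+i) :=
      fun i => (strW_step (hWin i) (hno i) (hE i) (hcons i)).2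
    obtain ⟨m, ⟨i, rfl⟩, hmin⟩ := Ordinal.lt_wf.has_min
      (Set.range fun i => rankW E P1 F (ρ i) (k+i)) ⟨_, ⟨0, rfl⟩⟩
    exact hmin _ ⟨i+1, rfl⟩ (hdec i)
  · -- halting plays
    intro ρ n h0 hE hcons hstop
    by_contra hno
    push_neg at hno
    have hWin : ∀ i, i ≤ n → Win E P1 F (ρ i) (k+i) := by
      intro i
      induction i with
      | zero => intro _; rw [h0]; exact h
      | succ m ih =>
        intro hle
        have hm : m ≤ n := by omega
        have hmn : m < n := by omega
        exact (strW_step (ih hm) (hno m hm) (hE m hmn) (hcons m hmn)).1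
    have hWn := hWin n le_rfl
    rw [win_iff] at hWn
    rcases hWn with hF | ⟨_, w, hw, _⟩ | ⟨_, ⟨w, hw⟩, _⟩
    · exact hno n le_rfl hF
    · exact hstop w hw
    · exact hstop w hw

open Classical in
/-- Player 2's evasion: follow `σ` on Player-1 vertices, otherwise move to a losing
(for Player 1) successor when possible. -/
noncomputable def evade (E : ℕ → V → V → Prop) (P1 : V → Prop) (F : Set V) (σ : V → ℕ → V) :
    V → ℕ → V :=
  fun v t =>
    if P1 v then σ v t
    else if h : ∃ w, E t v w ∧ ¬ Win E P1 F w (t+1) then h.choose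
    else if h2 : ∃ w, E t v w then h2.choose else v

theorem evade_step {E : ℕ → V → V → Prop} {P1 : V → Prop} {F : Set V} {σ : V → ℕ → V} {k : ℕ}
    (h1 : ∀ (v : V) (t : ℕ), k ≤ t → P1 v → (∃ w, E t v w) → E t v (σ v t))
    {v : V} {t : ℕ} (hkt : k ≤ t) (hnw : ¬ Win E P1 F v t) (hex : ∃ w, E t v w) :
    E t v (evade E P1 F σ v t) ∧ ¬ Win E P1 F (evade E P1 F σ v t) (t+1) := by
  rw [win_iff] at hnw
  push_neg at hnw
  obtain ⟨hF, hP1, hP2⟩ := hnw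
  by_cases hp : P1 v
  · have hEσ := h1 v t hkt hp hex
    have hg : evade E P1 F σ v t = σ v t := if_pos hp
    rw [hg]
    exact ⟨hEσ, hP1 hp (σ v t) hEσ⟩
  · have hbad : ∃ w, E t v w ∧ ¬ Win E P1 F w (t+1) := hP2 hp hex
    have hg : evade E P1 F σ v t = hbad.choose := by
      rw [evade, if_neg hp, dif_pos hbad]
    rw [hg]
    exact hbad.choose_spec

noncomputable def evadePlay (E : ℕ → V → V → Prop) (P1 : V → Prop) (F : Set V) (σ : V → ℕ → V)
    (u : V) (k : ℕ) : ℕ → V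
  | 0 => u
  | i + 1 => evade E P1 F σ (evadePlay E P1 F σ u k i) (k + i)

theorem p1WinsReach_win {E : ℕ → V → V → Prop} {P1 : V → Prop} {F : Set V} {u : V} {k : ℕ}
    (h : P1WinsReach E P1 F u k) : Win E P1 F u k := by
  obtain ⟨σ, h1, h2, h3⟩ := h
  by_contra hnW
  set ρ : ℕ → V := evadePlay E P1 F σ u k with hρ
  have hρ0 : ρ 0 = u := rfl
  have hρs : ∀ i, ρ (i+1) = evade E P1 F σ (ρ i) (k+i) := fun i => rfl
  have hconsρ : ∀ i, P1 (ρ i) → ρ (i+1) = σ (ρ i) (k+i) := by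
    intro i hp
    rw [hρs i, evade, if_pos hp]
  by_cases hA : ∀ i, ∃ w, E (k+i) (ρ i) w
  · have hnw : ∀ i, ¬ Win E P1 F (ρ i) (k+i) := by
      intro i
      induction i with
      | zero => exact hnW
      | succ m ih =>
        rw [hρs m]
        exact (evade_step h1 (Nat.le_add_right k m) ih (hA m)).2
    have hE' : ∀ i, E (k+i) (ρ i) (ρ (i+1)) := by
      intro i
      rw [hρs i]
      exact (evade_step h1 (Nat.le_add_right k i) (hnw i) (hA i)).1
    obtain ⟨i, hi⟩ := h2 ρ rfl hE' hconsρ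
    exact hnw i (win_of_mem hi)
  · push_neg at hA
    have hn' : ∃ n, ∀ w, ¬ E (k+n) (ρ n) w := hA
    classical
    set n := Nat.find hn' with hndef
    have hstop : ∀ w, ¬ E (k+n) (ρ n) w := Nat.find_spec hn'
    have hlt : ∀ i < n, ∃ w, E (k+i) (ρ i) w := by
      intro i hi
      have := Nat.find_min hn' hi
      push_neg at this
      exact this
    have hnw : ∀ i, i ≤ n → ¬ Win E P1 F (ρ i) (k+i) := by
      intro i
      induction i with
      | zero => intro _; exact hnW
      | succ m ih =>
        intro hle
        have hm : m < n := by omega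
        rw [hρs m]
        exact (evade_step h1 (Nat.le_add_right k m) (ih (by omega)) (hlt m hm)).2
    have hE' : ∀ i < n, E (k+i) (ρ i) (ρ (i+1)) := by
      intro i hi
      rw [hρs i]
      exact (evade_step h1 (Nat.le_add_right k i) (hnw i hi.le) (hlt i hi)).1
    obtain ⟨i, hin, hiF⟩ := h3 ρ n rfl hE' (fun i _ => hconsρ i) hstop
    exact hnw i hin (win_of_mem hiF)

theorem win_congr_mp {E : ℕ → V → V → Prop} {P1 : V → Prop} {F : Set V} {t t' : ℕ}
    (he : ∀ u v, E t u v ↔ E t' u v)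
    (hw : ∀ w, Win E P1 F w (t+1) ↔ Win E P1 F w (t'+1)) (v : V)
    (h : Win E P1 F v t) : Win E P1 F v t' := by
  rw [win_iff] at h ⊢
  rcases h with h | ⟨h1, w, hew, hww⟩ | ⟨h1, ⟨w0, hw0⟩, hall⟩
  · exact Or.inl h
  · exact Or.inr (Or.inl ⟨h1, w, (he _ _).1 hew, (hw w).1 hww⟩)
  · exact Or.inr (Or.inr ⟨h1, ⟨w0, (he _ _).1 hw0⟩,
      fun w hwE => (hw w).1 (hall w ((he _ _).2 hwE))⟩)

theorem win_congr {E : ℕ → V → V → Prop} {P1 : V → Prop} {F : Set V} {t t' : ℕ}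
    (he : ∀ u v, E t u v ↔ E t' u v)
    (hw : ∀ w, Win E P1 F w (t+1) ↔ Win E P1 F w (t'+1)) (v : V) :
    Win E P1 F v t ↔ Win E P1 F v t' :=
  ⟨win_congr_mp he hw v,
   win_congr_mp (fun u v => (he u v).symm) (fun w => (hw w).symm) v⟩


/-- Suppose `a < b` and the edge relation is constant on the interval of times
`a ≤ t < b`.  If the winning regions satisfy `W_{b-1} = W_b`, then `W_t = W_b` for all
`t` with `a ≤ t ≤ b`. -/
theorem winning_region_stable_on_constant_interval
    {V : Type*} (E : ℕ → V → V → Prop) (P1 : V → Prop) (F : Set V)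
    (a b : ℕ) (hab : a < b)
    (hconst : ∀ t, a ≤ t → t < b → ∀ u v : V, E t u v ↔ E a u v)
    (hstab : {u : V | P1WinsReach E P1 F u (b - 1)} = {u : V | P1WinsReach E P1 F u b})
    (t : ℕ) (hat : a ≤ t) (htb : t ≤ b) :
    {u : V | P1WinsReach E P1 F u t} = {u : V | P1WinsReach E P1 F u b} := by
  have equiv : ∀ (u : V) (s : ℕ), P1WinsReach E P1 F u s ↔ Win E P1 F u s :=
    fun u s => ⟨p1WinsReach_win, win_p1WinsReach⟩
  have hstab' : ∀ u : V, Win E P1 F u (b-1) ↔ Win E P1 F u b := by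
    intro u
    have := Set.ext_iff.mp hstab u
    simp only [Set.mem_setOf_eq, equiv] at this
    exact this
  have key : ∀ d, a + d ≤ b - 1 → ∀ u : V, Win E P1 F u (b - 1 - d) ↔ Win E P1 F u (b-1) := by
    intro d
    induction d with
    | zero => intro _ u; norm_num
    | succ m ih =>
      intro hd u
      have hE : ∀ x y : V, E (b-1-(m+1)) x y ↔ E (b-1) x y := by
        intro x y
        rw [hconst (b-1-(m+1)) (by omega) (by omega) x y,
            hconst (b-1) (by omega) (by omega) x y]
      have hWs : ∀ w : V, Win E P1 F w (b-1-(m+1)+1) ↔ Win E P1 F w ((b-1)+1) := by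
        intro w
        rw [show b-1-(m+1)+1 = b-1-m by omega, show (b-1)+1 = b by omega]
        exact (ih (by omega) w).trans (hstab' w)
      exact win_congr hE hWs u
  ext u
  simp only [Set.mem_setOf_eq, equiv]
  rcases eq_or_lt_of_le htb with rfl | hlt
  · exact Iff.rfl
  · have := key (b-1-t) (by omega) u
    rw [show b-1-(b-1-t) = t by omega] at this
    exact this.trans (hstab' u)
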